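/- Fix σ > 0. For every integer k ≥ 1 there exists a constant C_k < ∞, depending only on k and σ (and not on y or λ), such that for all λ ∈ ℝ and y ∈ ℝ, a random variable T with distribution Texp(λ, y) satisfies E Tᵏ ≤ C_k (|y|ᵏ + |λ|ᵏ + 1). -/

import Mathlib

open MeasureTheory

/-- The `N(0, σ²)` density. -/
noncomputable def gpdf (σ x : ℝ) : ℝ :=
  (Real.sqrt (2 * Real.pi * σ ^ 2))⁻¹ * Real.exp (-x ^ 2 / (2 * σ ^ 2))

/-- The normalizing constant of the tilted exponential distribution `Texp(λ, y)`. -/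
noncomputable def Z1 (σ lam y : ℝ) : ℝ :=
  ∫ u in Set.Ioi (0 : ℝ), Real.exp (-(1 - lam) * u) * gpdf σ (u - y)

/-- The density of the tilted exponential distribution `Texp(λ, y)` on `[0, ∞)`. -/
noncomputable def texpDens (σ lam y u : ℝ) : ℝ :=
  Real.exp (-(1 - lam) * u) * gpdf σ (u - y) / Z1 σ lam y

/-!
The unnormalized density `w(u) = e^{-(1-λ)u} φ_σ(u - y)` is log-concave, and its log-derivative
is at most `-1` beyond `A = |y| + σ²|λ|`. Hence `w(u) ≤ e^{v-u} w(v)` for `A ≤ v ≤ u`; averaging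
over `v ∈ (A, A+1]` gives `w(u) ≤ e^{A+1-u} Z₁` for `u ≥ A + 1`, so the density is at most
`e^{A+1-u}` there. Splitting `E Tᵏ` at `A + 1` gives `E Tᵏ ≤ (1 + c_k) (A + 2)ᵏ` with
`c_k = ∫₀^∞ (t+1)ᵏ e^{-t} dt`, and `(A + 2)ᵏ ≲ |y|ᵏ + |λ|ᵏ + 1`.
-/

open Set Real

lemma add_add_pow_le {a b c : ℝ} (ha : 0 ≤ a) (hb : 0 ≤ b) (hc : 0 ≤ c) (k : ℕ) :
    (a + b + c) ^ k ≤ 3 ^ k * (a ^ k + b ^ k + c ^ k) := by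
  have hsum : a + b + c ≤ 3 * max (max a b) c := by
    have := le_max_left (max a b) c
    have := le_max_right (max a b) c
    have := le_max_left a b
    have := le_max_right a b
    linarith
  have hmax : max (max a b) c ^ k ≤ a ^ k + b ^ k + c ^ k := by
    have := pow_nonneg ha k
    have := pow_nonneg hb k
    have := pow_nonneg hc k
    rcases max_choice (max a b) c with h | h
    · rcases max_choice a b with h' | h' <;> rw [h, h'] <;> linarith
    · rw [h]; linarith
  calc (a + b + c) ^ k ≤ (3 * max (max a b) c) ^ k := by gcongr
    _ = 3 ^ k * max (max a b) c ^ k := mul_pow _ _ _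
    _ ≤ 3 ^ k * (a ^ k + b ^ k + c ^ k) := by gcongr

lemma add_mul_add_two_pow_le {a b s : ℝ} (ha : 0 ≤ a) (hb : 0 ≤ b) (hs : 0 ≤ s) (k : ℕ) :
    (a + s * b + 2) ^ k ≤ (3 * (s + 2)) ^ k * (a ^ k + b ^ k + 1) := by
  calc (a + s * b + 2) ^ k ≤ ((s + 2) * (a + b + 1)) ^ k := by gcongr; nlinarith
    _ = (s + 2) ^ k * (a + b + 1) ^ k := mul_pow _ _ _
    _ ≤ (s + 2) ^ k * (3 ^ k * (a ^ k + b ^ k + 1 ^ k)) := by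
      gcongr; exact add_add_pow_le ha hb zero_le_one k
    _ = (3 * (s + 2)) ^ k * (a ^ k + b ^ k + 1) := by rw [one_pow, mul_pow]; ring

lemma setIntegral_Ioi_comp_sub (g : ℝ → ℝ) (a : ℝ) :
    ∫ u in Ioi a, g (u - a) = ∫ t in Ioi 0, g t := by
  simpa [preimage_sub_const_Ioi] using
    (measurePreserving_sub_right volume a).setIntegral_preimage_emb
      (measurableEmbedding_subRight a) g (Ioi 0)

lemma integrableOn_Ioi_comp_sub {g : ℝ → ℝ} (hg : IntegrableOn g (Ioi 0)) (a : ℝ) :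
    IntegrableOn (fun u => g (u - a)) (Ioi a) := by
  have := ((measurePreserving_sub_right volume a).integrableOn_comp_preimage
    (measurableEmbedding_subRight a)).2 hg
  simpa [preimage_sub_const_Ioi, Function.comp_def] using this

noncomputable def powExpWeight (k : ℕ) (t : ℝ) : ℝ :=
  (t + 1) ^ k * exp (-t)

lemma powExpWeight_nonneg (k : ℕ) {t : ℝ} (ht : 0 ≤ t) : 0 ≤ powExpWeight k t := by
  unfold powExpWeight; positivity

lemma integrableOn_powExpWeight (k : ℕ) : IntegrableOn (powExpWeight k) (Ioi 0) := by
  have hdom : ∀ t ∈ Ioi (0 : ℝ),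
      powExpWeight k t ≤ 2 ^ k * k.factorial * exp (1 / 2) * exp (-(1 / 2) * t) := by
    intro t ht
    rw [powExpWeight]
    have hseries := pow_div_factorial_le_exp ((t + 1) / 2) (by linarith [mem_Ioi.1 ht]) k
    rw [div_le_iff₀ (by positivity), div_pow, div_le_iff₀ (by positivity)] at hseries
    have hexp : exp ((t + 1) / 2) * exp (-t) = exp (1 / 2) * exp (-(1 / 2) * t) := by
      rw [← exp_add, ← exp_add]; ring_nf
    calc (t + 1) ^ k * exp (-t) ≤ exp ((t + 1) / 2) * k.factorial * 2 ^ k * exp (-t) := by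
          gcongr
      _ = 2 ^ k * k.factorial * exp (1 / 2) * exp (-(1 / 2) * t) := by
          rw [mul_assoc (2 ^ k * _), ← hexp]; ring
  refine Integrable.mono'
    ((exp_neg_integrableOn_Ioi 0 one_half_pos).const_mul (2 ^ k * k.factorial * exp (1 / 2)))
    (by unfold powExpWeight; fun_prop : Continuous _).aestronglyMeasurable ?_
  filter_upwards [ae_restrict_mem measurableSet_Ioi] with t ht
  rw [norm_of_nonneg (powExpWeight_nonneg k (mem_Ioi.1 ht).le)]
  exact hdom t ht

def ExpDecayFrom (A : ℝ) (f : ℝ → ℝ) : Prop :=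
  ∀ ⦃v u⦄, A ≤ v → v ≤ u → f u ≤ exp (v - u) * f v

namespace ExpDecayFrom

variable {f : ℝ → ℝ} {A : ℝ}

lemma integrableOn_Ioi (hdecay : ExpDecayFrom A f) (hf : Continuous f) (hf0 : 0 ≤ f)
    (hA : 0 ≤ A) :
    IntegrableOn f (Ioi 0) := by
  rw [← Ioc_union_Ioi_eq_Ioi hA]
  refine hf.integrableOn_Ioc.union <|
    Integrable.mono' ((exp_neg_integrableOn_Ioi A one_pos).const_mul (exp A * f A))
      hf.aestronglyMeasurable ?_
  filter_upwards [ae_restrict_mem measurableSet_Ioi] with u hu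
  calc ‖f u‖ = f u := norm_of_nonneg (hf0 u)
    _ ≤ exp (A - u) * f A := hdecay le_rfl (mem_Ioi.1 hu).le
    _ = exp A * f A * exp (-1 * u) := by rw [sub_eq_add_neg, exp_add]; ring_nf

lemma le_exp_mul_integral (hdecay : ExpDecayFrom A f) (hf : Continuous f) (hf0 : 0 ≤ f)
    (hA : 0 ≤ A) {u : ℝ} (hu : A + 1 ≤ u) :
    f u ≤ exp (A + 1 - u) * ∫ v in Ioi 0, f v := by
  have hint := hdecay.integrableOn_Ioi hf hf0 hA
  have hsub : Ioc A (A + 1) ⊆ Ioi 0 := fun v hv => hA.trans_lt hv.1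
  calc f u = ∫ _ in Ioc A (A + 1), f u := by simp
    _ ≤ ∫ v in Ioc A (A + 1), exp (A + 1 - u) * f v := by
        refine setIntegral_mono_on (integrableOn_const measure_Ioc_lt_top.ne)
          ((hint.mono_set hsub).const_mul _) measurableSet_Ioc fun v hv => ?_
        calc f u ≤ exp (v - u) * f v := hdecay hv.1.le (hv.2.trans hu)
          _ ≤ exp (A + 1 - u) * f v := by gcongr; exacts [hf0 v, hv.2]
    _ = exp (A + 1 - u) * ∫ v in Ioc A (A + 1), f v := integral_const_mul _ _
    _ ≤ exp (A + 1 - u) * ∫ v in Ioi 0, f v :=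
        mul_le_mul_of_nonneg_left (setIntegral_mono_set hint (.of_forall hf0) hsub.eventuallyLE)
          (exp_nonneg _)

lemma pow_mul_le (hdecay : ExpDecayFrom A f) (hf : Continuous f) (hf0 : 0 ≤ f)
    (hA : 0 ≤ A) (k : ℕ) {u : ℝ}
    (hu : A + 1 ≤ u) :
    u ^ k * f u ≤
      (A + 2) ^ k * (∫ v in Ioi 0, f v) * powExpWeight k (u - (A + 1)) := by
  have hu' : u ≤ (A + 2) * (u - (A + 1) + 1) := by nlinarith
  calc u ^ k * f u ≤ u ^ k * (exp (A + 1 - u) * ∫ v in Ioi 0, f v) :=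
        mul_le_mul_of_nonneg_left (hdecay.le_exp_mul_integral hf hf0 hA hu)
          (pow_nonneg (by linarith) k)
    _ ≤ ((A + 2) * (u - (A + 1) + 1)) ^ k * (exp (A + 1 - u) * ∫ v in Ioi 0, f v) := by
        gcongr
        · exact mul_nonneg (exp_nonneg _) (setIntegral_nonneg measurableSet_Ioi fun v _ => hf0 v)
        · linarith
    _ = (A + 2) ^ k * (∫ v in Ioi 0, f v) * powExpWeight k (u - (A + 1)) := by
        rw [powExpWeight, mul_pow, neg_sub]; ring

lemma setIntegral_pow_mul_le (hdecay : ExpDecayFrom A f) (hf : Continuous f) (hf0 : 0 ≤ f)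
    (hA : 0 ≤ A) (k : ℕ) :
    ∫ u in Ioi 0, u ^ k * f u ≤
      (1 + ∫ t in Ioi 0, powExpWeight k t) * (A + 2) ^ k * ∫ u in Ioi 0, f u := by
  set Z := ∫ u in Ioi 0, f u
  have hZ : 0 ≤ Z := setIntegral_nonneg measurableSet_Ioi fun v _ => hf0 v
  have hmom : Continuous fun u => u ^ k * f u := by fun_prop
  have hshift : IntegrableOn (fun u => powExpWeight k (u - (A + 1))) (Ioi (A + 1)) :=
    integrableOn_Ioi_comp_sub (integrableOn_powExpWeight k) (A + 1)
  have hhead : ∫ u in Ioc 0 (A + 1), u ^ k * f u ≤ (A + 2) ^ k * Z := by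
    calc ∫ u in Ioc 0 (A + 1), u ^ k * f u ≤ ∫ u in Ioc 0 (A + 1), (A + 2) ^ k * f u :=
          setIntegral_mono_on hmom.integrableOn_Ioc (hf.integrableOn_Ioc.const_mul _)
            measurableSet_Ioc fun u hu => by
              gcongr; exacts [hf0 u, hu.1.le, by linarith [hu.2]]
      _ = (A + 2) ^ k * ∫ u in Ioc 0 (A + 1), f u := integral_const_mul _ _
      _ ≤ (A + 2) ^ k * Z := by
          gcongr
          exact setIntegral_mono_set (hdecay.integrableOn_Ioi hf hf0 hA) (.of_forall hf0)
            Ioc_subset_Ioi_self.eventuallyLE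
  have htail_bound : ∀ u ∈ Ioi (A + 1), u ^ k * f u ≤
      (A + 2) ^ k * Z * powExpWeight k (u - (A + 1)) :=
    fun u hu => hdecay.pow_mul_le hf hf0 hA k (mem_Ioi.1 hu).le
  have htail_int : IntegrableOn (fun u => u ^ k * f u) (Ioi (A + 1)) := by
    refine Integrable.mono' (hshift.const_mul ((A + 2) ^ k * Z)) hmom.aestronglyMeasurable ?_
    filter_upwards [ae_restrict_mem measurableSet_Ioi] with u hu
    have hu0 : 0 ≤ u := by linarith [mem_Ioi.1 hu]
    rw [norm_of_nonneg (mul_nonneg (pow_nonneg hu0 k) (hf0 u))]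
    exact htail_bound u hu
  have htail : ∫ u in Ioi (A + 1), u ^ k * f u ≤
      (A + 2) ^ k * Z * ∫ t in Ioi 0, powExpWeight k t := by
    calc ∫ u in Ioi (A + 1), u ^ k * f u
        ≤ ∫ u in Ioi (A + 1), (A + 2) ^ k * Z * powExpWeight k (u - (A + 1)) :=
          setIntegral_mono_on htail_int (hshift.const_mul _) measurableSet_Ioi htail_bound
      _ = (A + 2) ^ k * Z * ∫ t in Ioi 0, powExpWeight k t := by
          rw [integral_const_mul, setIntegral_Ioi_comp_sub (powExpWeight k)]
  have hsplit : ∫ u in Ioi 0, u ^ k * f u =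
      (∫ u in Ioc 0 (A + 1), u ^ k * f u) + ∫ u in Ioi (A + 1), u ^ k * f u := by
    rw [← Ioc_union_Ioi_eq_Ioi (by linarith : (0 : ℝ) ≤ A + 1),
      setIntegral_union Ioc_disjoint_Ioi_same measurableSet_Ioi hmom.integrableOn_Ioc htail_int]
  linarith

end ExpDecayFrom

noncomputable def texpWeight (σ lam y u : ℝ) : ℝ :=
  exp (-(1 - lam) * u) * gpdf σ (u - y)

lemma Z1_eq_integral_texpWeight (σ lam y : ℝ) :
    Z1 σ lam y = ∫ u in Ioi 0, texpWeight σ lam y u := rfl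

lemma texpDens_eq (σ lam y u : ℝ) : texpDens σ lam y u = texpWeight σ lam y u / Z1 σ lam y := rfl

lemma continuous_texpWeight (σ lam y : ℝ) : Continuous (texpWeight σ lam y) := by
  unfold texpWeight gpdf
  fun_prop

lemma texpWeight_pos {σ : ℝ} (hσ : σ ≠ 0) (lam y u : ℝ) : 0 < texpWeight σ lam y u := by
  unfold texpWeight gpdf
  have : 0 < 2 * π * σ ^ 2 := by positivity
  positivity

lemma expDecayFrom_texpWeight {σ : ℝ} (hσ : σ ≠ 0) (lam y : ℝ) :
    ExpDecayFrom (|y| + σ ^ 2 * |lam|) (texpWeight σ lam y) := by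
  intro v u hv hvu
  have hσ2 : 0 < 2 * σ ^ 2 := by positivity
  have hexponent : -(1 - lam) * u + -(u - y) ^ 2 / (2 * σ ^ 2) ≤
      v - u + (-(1 - lam) * v + -(v - y) ^ 2 / (2 * σ ^ 2)) := by
    have hslope : 0 ≤ (u - v) * (u + v - 2 * y - 2 * σ ^ 2 * lam) := by
      apply mul_nonneg (by linarith)
      nlinarith [le_abs_self y, le_abs_self lam, sq_nonneg σ]
    rw [← sub_nonneg]
    have : v - u + (-(1 - lam) * v + -(v - y) ^ 2 / (2 * σ ^ 2)) -
        (-(1 - lam) * u + -(u - y) ^ 2 / (2 * σ ^ 2)) =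
        (u - v) * (u + v - 2 * y - 2 * σ ^ 2 * lam) / (2 * σ ^ 2) := by
      field_simp; ring
    rw [this]
    exact div_nonneg hslope hσ2.le
  unfold texpWeight gpdf
  calc exp (-(1 - lam) * u) * ((√(2 * π * σ ^ 2))⁻¹ * exp (-(u - y) ^ 2 / (2 * σ ^ 2)))
      = (√(2 * π * σ ^ 2))⁻¹ * exp (-(1 - lam) * u + -(u - y) ^ 2 / (2 * σ ^ 2)) := by
        rw [exp_add, neg_div]; ring
    _ ≤ (√(2 * π * σ ^ 2))⁻¹ * exp (v - u + (-(1 - lam) * v + -(v - y) ^ 2 / (2 * σ ^ 2))) := by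
        gcongr
    _ = exp (v - u) * (exp (-(1 - lam) * v) *
          ((√(2 * π * σ ^ 2))⁻¹ * exp (-(v - y) ^ 2 / (2 * σ ^ 2)))) := by
        rw [exp_add, exp_add, neg_div]; ring

theorem texp_moment_bound_general (σ : ℝ) (hσ : 0 < σ) (k : ℕ) :
    ∃ C : ℝ, ∀ lam y : ℝ,
      (∫ u in Set.Ioi (0 : ℝ), u ^ k * texpDens σ lam y u) ≤
        C * (|y| ^ k + |lam| ^ k + 1) := by
  set c := ∫ t in Ioi (0 : ℝ), powExpWeight k t
  have hc : 0 ≤ c :=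
    setIntegral_nonneg measurableSet_Ioi fun t ht => powExpWeight_nonneg k (mem_Ioi.1 ht).le
  refine ⟨(1 + c) * (3 * (σ ^ 2 + 2)) ^ k, fun lam y => ?_⟩
  have hA : 0 ≤ |y| + σ ^ 2 * |lam| := by positivity
  have hw := continuous_texpWeight σ lam y
  have hw0 : 0 ≤ texpWeight σ lam y := fun u => (texpWeight_pos hσ.ne' lam y u).le
  have hdecay := expDecayFrom_texpWeight hσ.ne' lam y
  have hZ : 0 < Z1 σ lam y := by
    have := hdecay.le_exp_mul_integral hw hw0 hA le_rfl
    rw [sub_self, exp_zero, one_mul, ← Z1_eq_integral_texpWeight] at this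
    exact (texpWeight_pos hσ.ne' lam y _).trans_le this
  calc ∫ u in Ioi 0, u ^ k * texpDens σ lam y u
      = (∫ u in Ioi 0, u ^ k * texpWeight σ lam y u) / Z1 σ lam y := by
        simp_rw [texpDens_eq, ← mul_div_assoc]; exact integral_div _ _
    _ ≤ (1 + c) * (|y| + σ ^ 2 * |lam| + 2) ^ k := by
        rw [div_le_iff₀ hZ, Z1_eq_integral_texpWeight]
        exact hdecay.setIntegral_pow_mul_le hw hw0 hA k
    _ ≤ (1 + c) * ((3 * (σ ^ 2 + 2)) ^ k * (|y| ^ k + |lam| ^ k + 1)) := by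
        gcongr
        exact add_mul_add_two_pow_le (abs_nonneg y) (abs_nonneg lam) (sq_nonneg σ) k
    _ = (1 + c) * (3 * (σ ^ 2 + 2)) ^ k * (|y| ^ k + |lam| ^ k + 1) := by ring

/-- Moment bounds for the tilted exponential distribution: for every `k ≥ 1` there is a
constant `C_k` (depending only on `k` and `σ`) with `E Tᵏ ≤ C_k (|y|ᵏ + |λ|ᵏ + 1)` for
`T ~ Texp(λ, y)`, for all `λ, y ∈ ℝ`. -/
theorem texp_moment_bound (σ : ℝ) (hσ : 0 < σ) (k : ℕ) (hk : 1 ≤ k) :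
    ∃ C : ℝ, ∀ lam y : ℝ,
      (∫ u in Set.Ioi (0 : ℝ), u ^ k * texpDens σ lam y u) ≤
        C * (|y| ^ k + |lam| ^ k + 1) :=
  texp_moment_bound_general σ hσ k
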